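/- Let Ψ be a root datum with finite automorphism group Γ stabilizing a base. The map i* induces a bijection between the set of Γ-invariant positive systems in Φ and the set of positive systems in Φ̄ = i*(Φ): a Γ-invariant positive system Π maps to i*(Π), and the inverse sends a positive system Π̄ ⊆ Φ̄ to (i*)^{-1}(Π̄) ∩ Φ. -/

import Mathlib

open scoped BigOperators Classical

/-- A (not necessarily reduced) root datum `Ψ = (X*, Φ, X_*, Φ^∨)`:
dual lattices `X`, `Y` in perfect duality, a finite set of roots, and a
coroot map satisfying the usual axioms. -/
structure ZRootDatum (X Y : Type) [AddCommGroup X] [AddCommGroup Y] : Type where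
  pair : X →+ Y →+ ℤ
  perfect : Function.Bijective fun x : X => pair x
  perfect' : Function.Bijective fun y : Y => pair.flip y
  roots : Finset X
  coroot : X → Y
  pair_self : ∀ β ∈ roots, pair β (coroot β) = 2
  reflect_mem : ∀ β ∈ roots, ∀ x ∈ roots, x - pair x (coroot β) • β ∈ roots
  coreflect_mem : ∀ β ∈ roots, ∀ β' ∈ roots,
    ∃ β'' ∈ roots, coroot β' - pair β (coroot β') • coroot β = coroot β''

variable {X Y Γ : Type} [AddCommGroup X] [AddCommGroup Y] [Group Γ]

/-- The multiplicative group structure on `AddAut A` (composition), as in the older Mathlib,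
where `AddAut A` carried a `Group` instance; current Mathlib gives it an `AddGroup` instead. -/
instance AddAut.groupOfComp (A : Type*) [Add A] : Group (AddAut A) where
  mul g h := AddEquiv.trans h g
  one := AddEquiv.refl _
  inv := AddEquiv.symm
  mul_assoc _ _ _ := rfl
  one_mul _ := rfl
  mul_one _ := rfl
  inv_mul_cancel := AddEquiv.self_trans_symm

/-- The Weyl group of a root datum: the subgroup of `Aut(X)` generated by the
reflections `w_β : x ↦ x - ⟨x, β^∨⟩β` through the roots. -/
def ZRootDatum.weylGroup (Ψ : ZRootDatum X Y) : Subgroup (AddAut X) :=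
  Subgroup.closure {w : AddAut X | ∃ β ∈ Ψ.roots, ∀ x, w x = x - Ψ.pair x (Ψ.coroot β) • β}

/-- `Δ` is a base (system of simple roots) of the root datum. -/
def ZRootDatum.IsBase (Ψ : ZRootDatum X Y) (Δ : Finset X) : Prop :=
  (↑Δ : Set X) ⊆ ↑Ψ.roots ∧
  LinearIndependent ℤ (fun a : ↥(↑Δ : Set X) => (a : X)) ∧
  ∀ β ∈ Ψ.roots, ∃ c : X → ℤ,
    β = ∑ a ∈ Δ, c a • a ∧ ((∀ a ∈ Δ, 0 ≤ c a) ∨ (∀ a ∈ Δ, c a ≤ 0))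

/-- A group `Γ` acting (via `ρ` on `X*` and `ρ'` on `X_*`) by automorphisms of
the root datum `Ψ`. -/
structure RDAction (Ψ : ZRootDatum X Y) (ρ : Γ →* AddAut X) (ρ' : Γ →* AddAut Y) : Prop where
  pair_eq : ∀ γ x y, Ψ.pair (ρ γ x) (ρ' γ y) = Ψ.pair x y
  root_mem : ∀ γ, ∀ β ∈ Ψ.roots, ρ γ β ∈ Ψ.roots
  coroot_eq : ∀ γ, ∀ β ∈ Ψ.roots, Ψ.coroot (ρ γ β) = ρ' γ (Ψ.coroot β)

/-- The norm map `N : x ↦ ∑_{γ ∈ Γ} γ·x`.  For a free lattice `X`, its kernel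
is exactly the kernel of the projection of `X` onto the coinvariants `X_Γ`
modulo torsion. -/
noncomputable def normMap [Fintype Γ] (ρ : Γ →* AddAut X) : X →+ X :=
  ∑ γ : Γ, ((ρ γ : X ≃+ X) : X →+ X)

/-- The projection `i* : X* → X̄*` onto the coinvariant lattice modulo torsion. -/
noncomputable def istar [Fintype Γ] (ρ : Γ →* AddAut X) : X →+ X ⧸ (normMap ρ).ker :=
  QuotientAddGroup.mk' (normMap ρ).ker


/-- A positive system in `Φ`: the set of roots pairing strictly positively with
some regular vector of the dual space. -/
def IsPosSystem (Ψ : ZRootDatum X Y) (P : Finset X) : Prop :=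
  ∃ v : Y, (∀ β ∈ Ψ.roots, Ψ.pair β v ≠ 0) ∧
    ∀ β, β ∈ P ↔ β ∈ Ψ.roots ∧ 0 < Ψ.pair β v

/-- A positive system in the restricted root system `Φ̄ = i*(Φ)`: the set of
restricted roots pairing strictly positively with some regular vector of the
dual space `X̄_* = (X_*)^Γ` of `X̄*`. -/
def IsPosSystemBar [Fintype Γ] (Ψ : ZRootDatum X Y) (ρ : Γ →* AddAut X)
    (ρ' : Γ →* AddAut Y) (P : Finset (X ⧸ (normMap ρ).ker)) : Prop :=
  ∃ v : Y, (∀ γ : Γ, ρ' γ v = v) ∧ (∀ β ∈ Ψ.roots, Ψ.pair β v ≠ 0) ∧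
    ∀ a, a ∈ P ↔ ∃ β ∈ Ψ.roots, istar ρ β = a ∧ 0 < Ψ.pair β v

/-!
A Γ-invariant positive system `Π`, cut out by a regular `v`, is also cut out by the Γ-average
`∑ γ, γ • v`: every root of `Π` pairs positively with each `γ • v`, every other root negatively.
Pairing with a Γ-fixed vector kills the kernel of the norm map, so it factors through `i*`.
Hence a positive system cut out by a Γ-fixed vector is the preimage in `Φ` of its image under
`i*`, which gives both the correspondence and its injectivity.
-/

section orbitSum

variable {A : Type} [AddCommGroup A]

lemma map_mul_apply_addAut (σ : Γ →* AddAut A) (g h : Γ) (x : A) :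
    σ (g * h) x = σ g (σ h x) := by
  rw [map_mul]; rfl

lemma apply_apply_inv_addAut (σ : Γ →* AddAut A) (g : Γ) (x : A) : σ g (σ g⁻¹ x) = x := by
  rw [← map_mul_apply_addAut, mul_inv_cancel, map_one]; rfl

variable [Fintype Γ]

lemma apply_sum_apply_addAut (σ : Γ →* AddAut A) (g : Γ) (x : A) :
    σ g (∑ γ, σ γ x) = ∑ γ, σ γ x := by
  rw [map_sum]
  exact Fintype.sum_equiv (Equiv.mulLeft g) _ _ fun γ => (map_mul_apply_addAut σ g γ x).symm

lemma sum_apply_apply_addAut (σ : Γ →* AddAut A) (g : Γ) (x : A) :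
    ∑ γ, σ γ (σ g x) = ∑ γ, σ γ x :=
  Fintype.sum_equiv (Equiv.mulRight g) _ _ fun γ => (map_mul_apply_addAut σ γ g x).symm

end orbitSum

section action

variable {Ψ : ZRootDatum X Y} {ρ : Γ →* AddAut X} {ρ' : Γ →* AddAut Y}

lemma RDAction.pair_apply_right (hact : RDAction Ψ ρ ρ') (γ : Γ) (x : X) (v : Y) :
    Ψ.pair x (ρ' γ v) = Ψ.pair (ρ γ⁻¹ x) v := by
  conv_lhs => rw [← apply_apply_inv_addAut ρ γ x]
  exact hact.pair_eq γ _ v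

lemma RDAction.pair_apply_left_of_fixed (hact : RDAction Ψ ρ ρ') {v : Y}
    (hv : ∀ γ, ρ' γ v = v) (γ : Γ) (x : X) : Ψ.pair (ρ γ x) v = Ψ.pair x v := by
  conv_lhs => rw [← hv γ]
  exact hact.pair_eq γ x v

variable [Fintype Γ]

lemma normMap_apply (ρ : Γ →* AddAut X) (x : X) : normMap ρ x = ∑ γ, ρ γ x := by
  simp [normMap]

lemma istar_apply_apply (ρ : Γ →* AddAut X) (γ : Γ) (x : X) : istar ρ (ρ γ x) = istar ρ x := by
  rw [istar, QuotientAddGroup.mk'_eq_mk']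
  refine ⟨x - ρ γ x, ?_, by abel⟩
  rw [AddMonoidHom.mem_ker, map_sub, sub_eq_zero, normMap_apply, normMap_apply,
    sum_apply_apply_addAut]

lemma RDAction.pair_eq_zero_of_mem_ker (hact : RDAction Ψ ρ ρ') {v : Y}
    (hv : ∀ γ, ρ' γ v = v) {x : X} (hx : x ∈ (normMap ρ).ker) : Ψ.pair x v = 0 := by
  have hnorm : Ψ.pair (normMap ρ x) v = Fintype.card Γ • Ψ.pair x v := by
    simp only [normMap_apply, map_sum, AddMonoidHom.finsetSum_apply,
      hact.pair_apply_left_of_fixed hv, Finset.sum_const, Finset.card_univ]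
  rw [AddMonoidHom.mem_ker.mp hx, map_zero, AddMonoidHom.zero_apply] at hnorm
  exact (smul_eq_zero.mp hnorm.symm).resolve_left Fintype.card_ne_zero

lemma RDAction.pair_eq_of_istar_eq (hact : RDAction Ψ ρ ρ') {v : Y}
    (hv : ∀ γ, ρ' γ v = v) {x y : X} (h : istar ρ x = istar ρ y) :
    Ψ.pair x v = Ψ.pair y v := by
  rw [istar, QuotientAddGroup.mk'_eq_mk'] at h
  obtain ⟨z, hz, rfl⟩ := h
  rw [map_add, AddMonoidHom.add_apply, hact.pair_eq_zero_of_mem_ker hv hz, add_zero]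

end action

section posSystem

variable [Fintype Γ] {Ψ : ZRootDatum X Y} {ρ : Γ →* AddAut X} {ρ' : Γ →* AddAut Y}

lemma RDAction.exists_fixed_of_isPosSystem (hact : RDAction Ψ ρ ρ') {P : Finset X}
    (hP : IsPosSystem Ψ P) (hinv : ∀ γ : Γ, ∀ b ∈ P, ρ γ b ∈ P) :
    ∃ w : Y, (∀ γ, ρ' γ w = w) ∧ (∀ β ∈ Ψ.roots, Ψ.pair β w ≠ 0) ∧
      ∀ β, β ∈ P ↔ β ∈ Ψ.roots ∧ 0 < Ψ.pair β w := by
  obtain ⟨v, hreg, hmem⟩ := hP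
  have hpair (β : X) : Ψ.pair β (∑ γ, ρ' γ v) = ∑ γ, Ψ.pair (ρ γ⁻¹ β) v := by
    simp only [map_sum, hact.pair_apply_right]
  have hpos (β : X) (hβ : β ∈ P) : 0 < Ψ.pair β (∑ γ, ρ' γ v) := by
    rw [hpair]
    exact Finset.sum_pos (fun γ _ => ((hmem _).mp (hinv γ⁻¹ β hβ)).2) Finset.univ_nonempty
  have hneg (β : X) (hβ : β ∈ Ψ.roots) (hβP : β ∉ P) : Ψ.pair β (∑ γ, ρ' γ v) < 0 := by
    rw [hpair]
    refine Finset.sum_neg (fun γ _ => ?_) Finset.univ_nonempty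
    have hγβ : ρ γ⁻¹ β ∉ P := fun h => hβP (apply_apply_inv_addAut ρ γ β ▸ hinv γ _ h)
    have hroot := hact.root_mem γ⁻¹ β hβ
    exact (hreg _ hroot).lt_of_le (not_lt.mp fun h => hγβ ((hmem _).mpr ⟨hroot, h⟩))
  refine ⟨∑ γ, ρ' γ v, fun γ => apply_sum_apply_addAut ρ' γ v, fun β hβ => ?_, fun β => ?_⟩
  · by_cases hβP : β ∈ P
    exacts [(hpos β hβP).ne', (hneg β hβ hβP).ne]
  · refine ⟨fun hβP => ⟨((hmem β).mp hβP).1, hpos β hβP⟩, fun ⟨hβ, h⟩ => ?_⟩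
    by_contra hβP
    exact (hneg β hβ hβP).not_gt h

lemma mem_image_istar_iff {P : Finset X} {w : Y}
    (hmem : ∀ β, β ∈ P ↔ β ∈ Ψ.roots ∧ 0 < Ψ.pair β w) (a : X ⧸ (normMap ρ).ker) :
    a ∈ P.image (istar ρ) ↔ ∃ β ∈ Ψ.roots, istar ρ β = a ∧ 0 < Ψ.pair β w := by
  simp only [Finset.mem_image, hmem, and_assoc]
  exact exists_congr fun β => by tauto

lemma RDAction.mem_filter_istar_mem_iff (hact : RDAction Ψ ρ ρ') {Q : Finset (X ⧸ (normMap ρ).ker)}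
    {v : Y} (hv : ∀ γ, ρ' γ v = v)
    (hQ : ∀ a, a ∈ Q ↔ ∃ β ∈ Ψ.roots, istar ρ β = a ∧ 0 < Ψ.pair β v) (β : X) :
    β ∈ Ψ.roots.filter (fun b => istar ρ b ∈ Q) ↔ β ∈ Ψ.roots ∧ 0 < Ψ.pair β v := by
  rw [Finset.mem_filter, hQ]
  refine and_congr_right fun hβ => ⟨?_, fun h => ⟨β, hβ, rfl, h⟩⟩
  rintro ⟨β', -, hβ', h⟩
  rwa [hact.pair_eq_of_istar_eq hv hβ'.symm]

lemma RDAction.filter_istar_mem_image_eq (hact : RDAction Ψ ρ ρ') {P : Finset X}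
    (hP : IsPosSystem Ψ P) (hinv : ∀ γ : Γ, ∀ b ∈ P, ρ γ b ∈ P) :
    Ψ.roots.filter (fun b => istar ρ b ∈ P.image (istar ρ)) = P := by
  obtain ⟨w, hw, -, hmem⟩ := hact.exists_fixed_of_isPosSystem hP hinv
  ext β
  rw [hact.mem_filter_istar_mem_iff hw (mem_image_istar_iff hmem), hmem]

end posSystem

theorem pos_system_bijection_general
    [Fintype Γ]
    (Ψ : ZRootDatum X Y) (ρ : Γ →* AddAut X) (ρ' : Γ →* AddAut Y)
    (hact : RDAction Ψ ρ ρ') :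
    (∀ P : Finset X, IsPosSystem Ψ P → (∀ γ : Γ, ∀ b ∈ P, ρ γ b ∈ P) →
        IsPosSystemBar Ψ ρ ρ' (P.image (istar ρ))) ∧
    (∀ Q : Finset (X ⧸ (normMap ρ).ker), IsPosSystemBar Ψ ρ ρ' Q →
        IsPosSystem Ψ (Ψ.roots.filter fun b => istar ρ b ∈ Q) ∧
        (∀ γ : Γ, ∀ b ∈ (Ψ.roots.filter fun b => istar ρ b ∈ Q),
          ρ γ b ∈ (Ψ.roots.filter fun b => istar ρ b ∈ Q)) ∧
        (Ψ.roots.filter fun b => istar ρ b ∈ Q).image (istar ρ) = Q) ∧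
    (∀ P P' : Finset X, IsPosSystem Ψ P → (∀ γ : Γ, ∀ b ∈ P, ρ γ b ∈ P) →
        IsPosSystem Ψ P' → (∀ γ : Γ, ∀ b ∈ P', ρ γ b ∈ P') →
        P.image (istar ρ) = P'.image (istar ρ) → P = P') := by
  refine ⟨fun P hP hinv => ?_, fun Q hQ => ?_, fun P P' hP hinv hP' hinv' himage => ?_⟩
  · obtain ⟨w, hw, hreg, hmem⟩ := hact.exists_fixed_of_isPosSystem hP hinv
    exact ⟨w, hw, hreg, mem_image_istar_iff hmem⟩
  · obtain ⟨v, hv, hreg, hQv⟩ := hQ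
    refine ⟨⟨v, hreg, hact.mem_filter_istar_mem_iff hv hQv⟩, fun γ b hb => ?_, ?_⟩
    · rw [Finset.mem_filter] at hb ⊢
      rw [istar_apply_apply]
      exact ⟨hact.root_mem γ b hb.1, hb.2⟩
    · have hQ_sub : Q ⊆ Ψ.roots.image (istar ρ) := fun a ha => by
        obtain ⟨β, hβ, rfl, -⟩ := (hQv a).mp ha
        exact Finset.mem_image_of_mem _ hβ
      rw [← Finset.filter_image (p := (· ∈ Q)), Finset.filter_mem_eq_inter,
        Finset.inter_eq_right.mpr hQ_sub]
  · rw [← hact.filter_istar_mem_image_eq hP hinv, himage, hact.filter_istar_mem_image_eq hP' hinv']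

/-- The map `i*` induces a bijection between the set of
`Γ`-invariant positive systems in `Φ` and the set of positive systems in
`Φ̄ = i*(Φ)`: a `Γ`-invariant positive system `Π` maps to `i*(Π)`, and the
inverse sends a positive system `Π̄ ⊆ Φ̄` to `(i*)⁻¹(Π̄) ∩ Φ`. -/
theorem pos_system_bijection
    [Fintype Γ] [Module.Free ℤ X] [Module.Finite ℤ X]
    (Ψ : ZRootDatum X Y) (ρ : Γ →* AddAut X) (ρ' : Γ →* AddAut Y)
    (hact : RDAction Ψ ρ ρ') (Δ : Finset X) (hΔ : Ψ.IsBase Δ)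
    (hstab : ∀ γ : Γ, ∀ a ∈ Δ, ρ γ a ∈ Δ) :
    (∀ P : Finset X, IsPosSystem Ψ P → (∀ γ : Γ, ∀ b ∈ P, ρ γ b ∈ P) →
        IsPosSystemBar Ψ ρ ρ' (P.image (istar ρ))) ∧
    (∀ Q : Finset (X ⧸ (normMap ρ).ker), IsPosSystemBar Ψ ρ ρ' Q →
        IsPosSystem Ψ (Ψ.roots.filter fun b => istar ρ b ∈ Q) ∧
        (∀ γ : Γ, ∀ b ∈ (Ψ.roots.filter fun b => istar ρ b ∈ Q),
          ρ γ b ∈ (Ψ.roots.filter fun b => istar ρ b ∈ Q)) ∧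
        (Ψ.roots.filter fun b => istar ρ b ∈ Q).image (istar ρ) = Q) ∧
    (∀ P P' : Finset X, IsPosSystem Ψ P → (∀ γ : Γ, ∀ b ∈ P, ρ γ b ∈ P) →
        IsPosSystem Ψ P' → (∀ γ : Γ, ∀ b ∈ P', ρ γ b ∈ P') →
        P.image (istar ρ) = P'.image (istar ρ) → P = P') :=
  pos_system_bijection_general Ψ ρ ρ' hact
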